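/- arXiv:2305.06687 — 4 statements merged into one kernel-verified Lean document; each statement's English description precedes it below -/
import Mathlib

section
/- Let F(x, y) = S(x) + R(x, y) + P(x) where S(x) = ∑_i (∑_j x_{ij} - 1)^2, R(x, y) = ∑_j (∑_i x_{ij} - ∑_{i'} y_{i'j})^2, and P(x) = ∑_j x_jᵀ L x_j with L the Laplacian of a graph G on n vertices. Then F(x, y) = 0 if and only if: (1) each vertex i is assigned to exactly one core j (∑_j x_{ij} = 1); (2) at most c_j vertices are assigned to core j for each j; (3) every pair of adjacent vertices in G is assigned to the same core; and (4) ∑_i x_{ij} = ∑_{i'} y_{i'j} for every j. -/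
/-- The Laplacian matrix `L = D - A` of a finite simple graph, over `ℤ`. -/
def graphLaplacian {n : ℕ} (G : SimpleGraph (Fin n)) [DecidableRel G.Adj] :
    Matrix (Fin n) (Fin n) ℤ :=
  fun i j => (if i = j then (G.degree i : ℤ) else 0) - (if G.Adj i j then 1 else 0)

/-- Uniqueness penalty `S(x) = ∑ᵢ (∑ⱼ xᵢⱼ - 1)²`. -/
def Spen (n k : ℕ) (x : Fin n → Fin k → ℤ) : ℤ :=
  ∑ i, (∑ j, x i j - 1) ^ 2

/-- Capacity penalty `R(x,y) = ∑ⱼ (∑ᵢ xᵢⱼ - ∑ᵢ' yᵢ'ⱼ)²` with `cⱼ` slack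
variables per core. -/
def Rpen (n k : ℕ) (c : Fin k → ℕ) (x : Fin n → Fin k → ℤ)
    (y : (j : Fin k) → Fin (c j) → ℤ) : ℤ :=
  ∑ j, (∑ i, x i j - ∑ i', y j i') ^ 2

/-- Cut-edge penalty `P(x) = ∑ⱼ xⱼᵀ L xⱼ`. -/
def Ppen (n k : ℕ) (G : SimpleGraph (Fin n)) [DecidableRel G.Adj]
    (x : Fin n → Fin k → ℤ) : ℤ :=
  ∑ j, ∑ u, ∑ v, x u j * graphLaplacian G u v * x v j

/-- Per-slice QUBO objective `F(x,y) = S(x) + R(x,y) + P(x)`. -/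
def Fobj (n k : ℕ) (c : Fin k → ℕ) (G : SimpleGraph (Fin n)) [DecidableRel G.Adj]
    (x : Fin n → Fin k → ℤ) (y : (j : Fin k) → Fin (c j) → ℤ) : ℤ :=
  Spen n k x + Rpen n k c x y + Ppen n k G x

lemma deg_eq_sum {n : ℕ} (G : SimpleGraph (Fin n)) [DecidableRel G.Adj] (u : Fin n) :
    (G.degree u : ℤ) = ∑ v, if G.Adj u v then 1 else 0 := by
  rw [SimpleGraph.degree, SimpleGraph.neighborFinset_eq_filter]
  rw [Finset.card_filter]
  push_cast
  rfl

lemma quad_two {n : ℕ} (G : SimpleGraph (Fin n)) [DecidableRel G.Adj] (f : Fin n → ℤ) :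
    (∑ u, ∑ v, f u * graphLaplacian G u v * f v) * 2
      = ∑ u, ∑ v, if G.Adj u v then (f u - f v) ^ 2 else 0 := by
  have h1 : ∀ u : Fin n, ∑ v, f u * graphLaplacian G u v * f v
      = ∑ v, (if G.Adj u v then f u * f u - f u * f v else 0) := by
    intro u
    rw [show (∑ v, f u * graphLaplacian G u v * f v) =
        (∑ v, (if u = v then (G.degree u : ℤ) * (f u * f v) else 0))
        - ∑ v, (if G.Adj u v then f u * f v else 0) by
      rw [← Finset.sum_sub_distrib]
      refine Finset.sum_congr rfl fun v _ => ?_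
      simp only [graphLaplacian]
      split_ifs <;> ring]
    rw [Finset.sum_ite_eq Finset.univ u (fun v => (G.degree u : ℤ) * (f u * f v))]
    simp only [Finset.mem_univ, if_true]
    rw [deg_eq_sum, Finset.sum_mul, ← Finset.sum_sub_distrib]
    refine Finset.sum_congr rfl fun v _ => ?_
    split_ifs <;> ring
  simp only [h1]
  have hsymm : (∑ u, ∑ v, if G.Adj u v then f u * f u else 0)
      = ∑ u, ∑ v, if G.Adj u v then f v * f v else 0 := by
    rw [Finset.sum_comm]
    refine Finset.sum_congr rfl fun u _ => Finset.sum_congr rfl fun v _ => ?_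
    simp [SimpleGraph.adj_comm]
  have expand : ∀ u v : Fin n,
      (if G.Adj u v then (f u - f v)^2 else 0)
      = (if G.Adj u v then f u * f u else 0) + (if G.Adj u v then f v * f v else 0)
        - 2 * (if G.Adj u v then f u * f v else 0) := by
    intro u v; split_ifs <;> ring
  simp only [expand]
  simp only [Finset.sum_sub_distrib, Finset.sum_add_distrib, ← Finset.mul_sum]
  rw [← hsymm]
  have : ∀ u v : Fin n, (if G.Adj u v then f u * f u - f u * f v else 0)
      = (if G.Adj u v then f u * f u else 0) - (if G.Adj u v then f u * f v else 0) := by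
    intro u v; split_ifs <;> ring
  simp only [this, Finset.sum_sub_distrib]
  ring

lemma quad_nonneg {n : ℕ} (G : SimpleGraph (Fin n)) [DecidableRel G.Adj] (f : Fin n → ℤ) :
    0 ≤ ∑ u, ∑ v, f u * graphLaplacian G u v * f v := by
  have h := quad_two G f
  have h2 : 0 ≤ ∑ u, ∑ v : Fin n, if G.Adj u v then (f u - f v) ^ 2 else 0 :=
    Finset.sum_nonneg fun u _ => Finset.sum_nonneg fun v _ => by positivity
  linarith

lemma quad_eq_zero_iff {n : ℕ} (G : SimpleGraph (Fin n)) [DecidableRel G.Adj] (f : Fin n → ℤ) :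
    (∑ u, ∑ v, f u * graphLaplacian G u v * f v) = 0 ↔
      ∀ u v, G.Adj u v → f u = f v := by
  constructor
  · intro h u v huv
    have h2 : (∑ u, ∑ v : Fin n, if G.Adj u v then (f u - f v) ^ 2 else 0) = 0 := by
      rw [← quad_two, h]; ring
    rw [Finset.sum_eq_zero_iff_of_nonneg
      (fun u _ => Finset.sum_nonneg fun v _ => by positivity)] at h2
    have h3 := h2 u (Finset.mem_univ u)
    rw [Finset.sum_eq_zero_iff_of_nonneg (fun v _ => by positivity)] at h3
    have h4 := h3 v (Finset.mem_univ v)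
    rw [if_pos huv] at h4
    have := sq_eq_zero_iff.mp h4
    linarith
  · intro h
    have h2 : (∑ u, ∑ v : Fin n, if G.Adj u v then (f u - f v) ^ 2 else 0) = 0 := by
      refine Finset.sum_eq_zero fun u _ => Finset.sum_eq_zero fun v _ => ?_
      split_ifs with huv
      · rw [h u v huv]; ring
      · rfl
    have := quad_two G f
    omega

/-- `F(x,y) = 0` iff: each vertex is assigned to exactly one core, at most
`cⱼ` vertices are assigned to core `j`, adjacent vertices share a core, and
the slack sums match the core loads. -/
theorem F_zero_iff (n k : ℕ) (c : Fin k → ℕ)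
    (G : SimpleGraph (Fin n)) [DecidableRel G.Adj]
    (x : Fin n → Fin k → ℤ) (y : (j : Fin k) → Fin (c j) → ℤ)
    (hx : ∀ i j, x i j = 0 ∨ x i j = 1)
    (hy : ∀ j i', y j i' = 0 ∨ y j i' = 1) :
    Fobj n k c G x y = 0 ↔
      ((∀ i, ∑ j, x i j = 1) ∧
       (∀ j, ∑ i, x i j ≤ (c j : ℤ)) ∧
       (∀ u v, G.Adj u v → ∀ j, x u j = 1 → x v j = 1) ∧
       (∀ j, ∑ i, x i j = ∑ i', y j i')) := by
  have hSnn : 0 ≤ Spen n k x := Finset.sum_nonneg fun i _ => by positivity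
  have hRnn : 0 ≤ Rpen n k c x y := Finset.sum_nonneg fun j _ => by positivity
  have hPnn : 0 ≤ Ppen n k G x :=
    Finset.sum_nonneg fun j _ => quad_nonneg G (fun u => x u j)
  constructor
  · intro h
    have hS : Spen n k x = 0 := by unfold Fobj at h; linarith
    have hR : Rpen n k c x y = 0 := by unfold Fobj at h; linarith
    have hP : Ppen n k G x = 0 := by unfold Fobj at h; linarith
    rw [Spen, Finset.sum_eq_zero_iff_of_nonneg (fun i _ => by positivity)] at hS
    rw [Rpen, Finset.sum_eq_zero_iff_of_nonneg (fun j _ => by positivity)] at hR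
    rw [Ppen, Finset.sum_eq_zero_iff_of_nonneg
      (fun j _ => quad_nonneg G (fun u => x u j))] at hP
    have h1 : ∀ i, ∑ j, x i j = 1 := by
      intro i
      have := sq_eq_zero_iff.mp (hS i (Finset.mem_univ i))
      linarith
    have h4 : ∀ j, ∑ i, x i j = ∑ i', y j i' := by
      intro j
      have := sq_eq_zero_iff.mp (hR j (Finset.mem_univ j))
      linarith
    refine ⟨h1, ?_, ?_, h4⟩
    · intro j
      rw [h4 j]
      calc ∑ i', y j i' ≤ ∑ _i' : Fin (c j), 1 :=
            Finset.sum_le_sum fun i' _ => by rcases hy j i' with h | h <;> omega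
        _ = (c j : ℤ) := by simp
    · intro u v huv j hu
      have := (quad_eq_zero_iff G (fun i => x i j)).mp (hP j (Finset.mem_univ j)) u v huv
      omega
  · rintro ⟨h1, _, h3, h4⟩
    have hS : Spen n k x = 0 := Finset.sum_eq_zero fun i _ => by rw [h1 i]; ring
    have hR : Rpen n k c x y = 0 := Finset.sum_eq_zero fun j _ => by rw [h4 j]; ring
    have hP : Ppen n k G x = 0 := by
      refine Finset.sum_eq_zero fun j _ => ?_
      rw [quad_eq_zero_iff G (fun i => x i j)]
      intro u v huv
      rcases hx u j with hu | hu <;> rcases hx v j with hv | hv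
      · omega
      · have := h3 v u huv.symm j hv; omega
      · have := h3 u v huv j hu; omega
      · omega
    unfold Fobj; omega
end

section
/- With F as the per-slice QUBO objective, if F(x, y) = 0 for some slack assignment y, then x represents a valid assignment: each qubit is mapped to exactly one core, no core j receives more than c_j qubits, and every pair of qubits joined by an edge of the interaction graph is mapped to the same core. -/
lemma quad_eq {n : ℕ} (G : SimpleGraph (Fin n)) [DecidableRel G.Adj] (f : Fin n → ℤ) :
    2 * (∑ u, ∑ v, f u * graphLaplacian G u v * f v)
      = ∑ u, ∑ v, (if G.Adj u v then (f u - f v) ^ 2 else 0) := by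
  have h1 : (∑ u, ∑ v, f u * graphLaplacian G u v * f v)
      = (∑ u, ∑ v, if G.Adj u v then f u * f u else 0)
        - ∑ u, ∑ v, if G.Adj u v then f u * f v else 0 := by
    rw [← Finset.sum_sub_distrib]
    refine Finset.sum_congr rfl fun u _ => ?_
    rw [← Finset.sum_sub_distrib]
    have : ∑ v, f u * graphLaplacian G u v * f v
        = ∑ v, ((if u = v then (G.degree u : ℤ) * (f u * f v) else 0)
            - (if G.Adj u v then f u * f v else 0)) := by
      refine Finset.sum_congr rfl fun v _ => ?_
      simp only [graphLaplacian]
      split_ifs <;> ring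
    rw [this, Finset.sum_sub_distrib]
    have h4 : ∑ v, (if u = v then (G.degree u : ℤ) * (f u * f v) else 0)
        = (G.degree u : ℤ) * (f u * f u) := by
      rw [Finset.sum_eq_single u]
      · simp
      · intro b _ hb; simp [Ne.symm hb]
      · simp
    rw [h4]
    rw [deg_eq_sum, Finset.sum_mul]
    have h5 : ∑ v, (if G.Adj u v then (1:ℤ) else 0) * (f u * f u)
        = ∑ v, if G.Adj u v then f u * f u else 0 := by
      refine Finset.sum_congr rfl fun v _ => ?_
      split_ifs <;> ring
    rw [h5, Finset.sum_sub_distrib]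
  have h2 : (∑ u, ∑ v, if G.Adj u v then f u * f u else 0)
      = ∑ u, ∑ v, if G.Adj u v then f v * f v else 0 := by
    rw [Finset.sum_comm]
    refine Finset.sum_congr rfl fun u _ => Finset.sum_congr rfl fun v _ => ?_
    simp only [G.adj_comm u v]
  rw [h1]
  have h3 : 2 * ((∑ u, ∑ v, if G.Adj u v then f u * f u else 0)
        - ∑ u, ∑ v, if G.Adj u v then f u * f v else 0)
      = ((∑ u, ∑ v, if G.Adj u v then f u * f u else 0)
        + (∑ u, ∑ v, if G.Adj u v then f v * f v else 0))
        - 2 * ∑ u, ∑ v, if G.Adj u v then f u * f v else 0 := by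
    rw [← h2]; ring
  rw [h3, ← Finset.sum_add_distrib, Finset.mul_sum, ← Finset.sum_sub_distrib]
  refine Finset.sum_congr rfl fun u _ => ?_
  rw [← Finset.sum_add_distrib, Finset.mul_sum, ← Finset.sum_sub_distrib]
  refine Finset.sum_congr rfl fun v _ => ?_
  split_ifs <;> ring

/-- If `F(x,y) = 0` for some binary slack assignment `y`, then `x` is a valid
assignment: each qubit is mapped to exactly one core, no core exceeds its
capacity, and adjacent qubits share a core. -/
theorem F_zero_valid_assignment (n k : ℕ) (c : Fin k → ℕ)
    (G : SimpleGraph (Fin n)) [DecidableRel G.Adj]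
    (x : Fin n → Fin k → ℤ) (y : (j : Fin k) → Fin (c j) → ℤ)
    (hx : ∀ i j, x i j = 0 ∨ x i j = 1)
    (hy : ∀ j i', y j i' = 0 ∨ y j i' = 1)
    (hF : Fobj n k c G x y = 0) :
    (∀ i, ∃! j, x i j = 1) ∧
    (∀ j, ∑ i, x i j ≤ (c j : ℤ)) ∧
    (∀ u v, G.Adj u v → ∀ j, x u j = 1 → x v j = 1) := by
  -- nonnegativity of the three pieces
  have hS0 : 0 ≤ Spen n k x :=
    Finset.sum_nonneg fun i _ => sq_nonneg _
  have hR0 : 0 ≤ Rpen n k c x y :=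
    Finset.sum_nonneg fun j _ => sq_nonneg _
  have hQ0 : ∀ j : Fin k, 0 ≤ ∑ u, ∑ v, x u j * graphLaplacian G u v * x v j := by
    intro j
    have h2 := quad_eq G (fun u => x u j)
    have : 0 ≤ ∑ u, ∑ v, (if G.Adj u v then ((x u j) - (x v j)) ^ 2 else 0) :=
      Finset.sum_nonneg fun u _ => Finset.sum_nonneg fun v _ => by positivity
    nlinarith [this, h2]
  have hP0 : 0 ≤ Ppen n k G x := Finset.sum_nonneg fun j _ => hQ0 j
  have hS : Spen n k x = 0 := by
    have := hF; unfold Fobj at this; linarith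
  have hR : Rpen n k c x y = 0 := by
    have := hF; unfold Fobj at this; linarith
  have hP : Ppen n k G x = 0 := by
    have := hF; unfold Fobj at this; linarith
  -- S = 0 gives row sums 1
  have hrow : ∀ i, ∑ j, x i j = 1 := by
    intro i
    have h := (Finset.sum_eq_zero_iff_of_nonneg (fun i _ => sq_nonneg _)).1 hS i (Finset.mem_univ i)
    have := pow_eq_zero_iff (n := 2) (by norm_num) |>.1 h
    linarith [sub_eq_zero.1 this]
  refine ⟨?_, ?_, ?_⟩
  · -- exactly one
    intro i
    have hcard : ∑ j, x i j = ((Finset.univ.filter (fun j => x i j = 1)).card : ℤ) := by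
      rw [Finset.card_filter]
      push_cast
      refine Finset.sum_congr rfl fun j _ => ?_
      rcases hx i j with h | h <;> simp [h]
    have h1 : (Finset.univ.filter (fun j => x i j = 1)).card = 1 := by
      have := hrow i
      rw [hcard] at this
      exact_mod_cast this
    obtain ⟨a, ha⟩ := Finset.card_eq_one.1 h1
    refine ⟨a, ?_, ?_⟩
    · have : a ∈ Finset.univ.filter (fun j => x i j = 1) := by rw [ha]; simp
      simpa using this
    · intro b hb
      have : b ∈ Finset.univ.filter (fun j => x i j = 1) := by simp [hb]
      rw [ha] at this
      simpa using this
  · -- capacity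
    intro j
    have h := (Finset.sum_eq_zero_iff_of_nonneg (fun j _ => sq_nonneg _)).1 hR j (Finset.mem_univ j)
    have heq : ∑ i, x i j = ∑ i', y j i' := by
      have := pow_eq_zero_iff (n := 2) (by norm_num) |>.1 h
      linarith [sub_eq_zero.1 this]
    have hyb : ∑ i', y j i' ≤ (c j : ℤ) := by
      calc ∑ i', y j i' ≤ ∑ _i' : Fin (c j), (1 : ℤ) :=
            Finset.sum_le_sum fun i' _ => by rcases hy j i' with h | h <;> simp [h]
        _ = (c j : ℤ) := by simp
    linarith [heq, hyb]
  · -- adjacency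
    intro u v huv j hu
    have hQj : (∑ u, ∑ v, x u j * graphLaplacian G u v * x v j) = 0 := by
      have := (Finset.sum_eq_zero_iff_of_nonneg (fun j _ => hQ0 j)).1 hP j (Finset.mem_univ j)
      exact this
    have h2 := quad_eq G (fun u => x u j)
    rw [hQj, mul_zero] at h2
    have hterm : (if G.Adj u v then ((x u j) - (x v j)) ^ 2 else 0) = 0 := by
      have houter := (Finset.sum_eq_zero_iff_of_nonneg
        (fun u _ => Finset.sum_nonneg fun v _ => by positivity)).1 h2.symm u (Finset.mem_univ u)
      exact (Finset.sum_eq_zero_iff_of_nonneg (fun v _ => by positivity)).1 houter v (Finset.mem_univ v)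
    rw [if_pos huv] at hterm
    have := pow_eq_zero_iff (n := 2) (by norm_num) |>.1 hterm
    have := sub_eq_zero.1 this
    rw [← this, hu]
end

section
/- Conversely, if x represents a valid assignment (each of the n qubits assigned to exactly one of k cores, at most c_j qubits on core j, and every edge of the interaction graph G internal to some core), then there exist binary slack variables y such that F(x, y) = 0. -/
lemma sum_indicator_lt (N m : ℕ) (h : m ≤ N) :
    ∑ i ∈ Finset.range N, (if i < m then (1:ℤ) else 0) = m := by
  induction N with
  | zero => interval_cases m; simp
  | succ N ih =>
    rw [Finset.sum_range_succ]
    rcases Nat.lt_or_ge N m with hm | hm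
    · have hmN : m = N + 1 := by omega
      subst hmN
      have hall : ∀ i ∈ Finset.range N, (if i < N + 1 then (1:ℤ) else 0) = 1 := by
        intro i hi
        simp only [Finset.mem_range] at hi
        simp [Nat.lt_succ_of_lt hi]
      rw [Finset.sum_congr rfl hall]
      simp
    · rw [ih hm]
      simp [Nat.not_lt.mpr hm]

/-- If `x` is a valid assignment (each qubit on exactly one core, capacities
respected, every edge internal to a core), then there exist binary slack
variables `y` with `F(x,y) = 0`. -/
theorem valid_assignment_F_zero (n k : ℕ) (c : Fin k → ℕ)
    (G : SimpleGraph (Fin n)) [DecidableRel G.Adj]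
    (x : Fin n → Fin k → ℤ)
    (hx : ∀ i j, x i j = 0 ∨ x i j = 1)
    (hunique : ∀ i, ∃! j, x i j = 1)
    (hcap : ∀ j, ∑ i, x i j ≤ (c j : ℤ))
    (hadj : ∀ u v, G.Adj u v → ∀ j, x u j = 1 → x v j = 1) :
    ∃ y : (j : Fin k) → Fin (c j) → ℤ,
      (∀ j i', y j i' = 0 ∨ y j i' = 1) ∧ Fobj n k c G x y = 0 := by
  have hnn : ∀ j, (0:ℤ) ≤ ∑ i, x i j := by
    intro j
    apply Finset.sum_nonneg
    intro i _
    rcases hx i j with h | h <;> simp [h]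
  set m : Fin k → ℕ := fun j => (∑ i, x i j).toNat with hm
  have hmval : ∀ j, ((m j : ℤ)) = ∑ i, x i j := by
    intro j; simp [hm, Int.toNat_of_nonneg (hnn j)]
  have hmle : ∀ j, m j ≤ c j := by
    intro j
    exact Int.toNat_le.mpr (hcap j)
  refine ⟨fun j i' => if (i' : ℕ) < m j then 1 else 0, ?_, ?_⟩
  · intro j i'
    by_cases h : (i' : ℕ) < m j <;> simp [h]
  -- helper facts
  have hsq : ∀ i j, x i j * x i j = x i j := by
    intro i j; rcases hx i j with h | h <;> simp [h]
  have hprod : ∀ u v, G.Adj u v → ∀ j, x u j * x v j = x u j := by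
    intro u v ha j
    rcases hx u j with h | h
    · simp [h]
    · rw [h, hadj u v ha j h, one_mul]
  have hrow : ∀ i, ∑ j, x i j = 1 := by
    intro i
    obtain ⟨j0, hj0, hu⟩ := hunique i
    rw [Finset.sum_eq_single j0]
    · exact hj0
    · intro b _ hb
      rcases hx i b with h | h
      · exact h
      · exact absurd (hu b h) hb
    · intro h; exact absurd (Finset.mem_univ j0) h
  have hdeg : ∀ u, (G.degree u : ℤ) = ∑ v, if G.Adj u v then (1:ℤ) else 0 := by
    intro u
    rw [Finset.sum_boole]
    simp [SimpleGraph.degree, SimpleGraph.neighborFinset_eq_filter]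
  have hS : Spen n k x = 0 := by
    unfold Spen
    apply Finset.sum_eq_zero
    intro i _
    simp [hrow i]
  have hR : Rpen n k c x (fun j i' => if (i' : ℕ) < m j then 1 else 0) = 0 := by
    unfold Rpen
    apply Finset.sum_eq_zero
    intro j _
    have hysum : ∑ i' : Fin (c j), (if (i' : ℕ) < m j then (1:ℤ) else 0) = m j := by
      rw [Fin.sum_univ_eq_sum_range (fun t => if t < m j then (1:ℤ) else 0)]
      exact sum_indicator_lt (c j) (m j) (hmle j)
    rw [hysum, hmval j]
    ring
  have hP : Ppen n k G x = 0 := by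
    unfold Ppen
    apply Finset.sum_eq_zero
    intro j _
    apply Finset.sum_eq_zero
    intro u _
    have expand : ∀ v, x u j * graphLaplacian G u v * x v j
        = x u j * (if u = v then (G.degree u : ℤ) else 0) * x v j
          - (if G.Adj u v then x u j * x v j else 0) := by
      intro v
      unfold graphLaplacian
      split_ifs <;> ring
    rw [Finset.sum_congr rfl (fun v _ => expand v), Finset.sum_sub_distrib]
    have h1 : ∑ v, x u j * (if u = v then (G.degree u : ℤ) else 0) * x v j
        = (G.degree u : ℤ) * x u j := by
      rw [Finset.sum_eq_single u]
      · rw [if_pos rfl]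
        calc x u j * (G.degree u : ℤ) * x u j
            = (G.degree u : ℤ) * (x u j * x u j) := by ring
          _ = (G.degree u : ℤ) * x u j := by rw [hsq]
      · intro b _ hb
        rw [if_neg (Ne.symm hb), mul_zero, zero_mul]
      · intro h; exact absurd (Finset.mem_univ u) h
    have h2 : ∑ v, (if G.Adj u v then x u j * x v j else 0)
        = (G.degree u : ℤ) * x u j := by
      have step : ∀ v, (if G.Adj u v then x u j * x v j else 0)
          = (if G.Adj u v then (1:ℤ) else 0) * x u j := by
        intro v
        by_cases ha : G.Adj u v
        · simp [ha, hprod u v ha j]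
        · simp [ha]
      rw [Finset.sum_congr rfl (fun v _ => step v), ← Finset.sum_mul, ← hdeg u]
    rw [h1, h2, sub_self]
  unfold Fobj
  rw [hS, hR, hP]
  ring
end

section
/- If some connected component of the interaction graph G of a circuit slice has more than max_j c_j vertices, then no valid assignment exists; equivalently, F(x, y) > 0 for every binary x and y. -/
open Finset Matrix

section Laplacian

variable {n : ℕ} (G : SimpleGraph (Fin n)) [DecidableRel G.Adj]

theorem graphLaplacian_map_intCast (R : Type*) [Ring R] :
    (graphLaplacian G).map (Int.cast : ℤ → R) = G.lapMatrix R := by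
  ext i j
  by_cases hij : i = j
  · subst hij; simp [graphLaplacian, SimpleGraph.lapMatrix, SimpleGraph.degMatrix]
  · by_cases hadj : G.Adj i j <;>
      simp [graphLaplacian, SimpleGraph.lapMatrix, SimpleGraph.degMatrix, hij, hadj]

theorem intCast_quadForm_graphLaplacian (f : Fin n → ℤ) :
    ((∑ u, ∑ v, f u * graphLaplacian G u v * f v : ℤ) : ℝ) =
      toLinearMap₂' ℝ (G.lapMatrix ℝ) (fun u => (f u : ℝ)) (fun u => (f u : ℝ)) := by
  rw [← graphLaplacian_map_intCast, toLinearMap₂'_apply]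
  push_cast
  simp only [map_apply, smul_eq_mul]
  refine sum_congr rfl fun u _ => sum_congr rfl fun v _ => by ring

theorem quadForm_graphLaplacian_nonneg (f : Fin n → ℤ) :
    0 ≤ ∑ u, ∑ v, f u * graphLaplacian G u v * f v := by
  have h : (0 : ℝ) ≤ ∑ u, ∑ v, f u * graphLaplacian G u v * f v := by
    rw [intCast_quadForm_graphLaplacian, SimpleGraph.lapMatrix_toLinearMap₂']
    positivity
  exact_mod_cast h

theorem quadForm_graphLaplacian_eq_zero_iff (f : Fin n → ℤ) :
    ∑ u, ∑ v, f u * graphLaplacian G u v * f v = 0 ↔ ∀ u v, G.Reachable u v → f u = f v := by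
  rw [← Int.cast_inj (α := ℝ), Int.cast_zero, intCast_quadForm_graphLaplacian,
    SimpleGraph.lapMatrix_toLinearMap₂'_apply'_eq_zero_iff_forall_reachable]
  simp only [Int.cast_inj]

end Laplacian

section Penalties

variable {n k : ℕ} {c : Fin k → ℕ} {G : SimpleGraph (Fin n)} [DecidableRel G.Adj]
  {x : Fin n → Fin k → ℤ} {y : (j : Fin k) → Fin (c j) → ℤ}

theorem Spen_nonneg : 0 ≤ Spen n k x :=
  sum_nonneg fun _ _ => sq_nonneg _

theorem Rpen_nonneg : 0 ≤ Rpen n k c x y :=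
  sum_nonneg fun _ _ => sq_nonneg _

theorem Ppen_nonneg : 0 ≤ Ppen n k G x :=
  sum_nonneg fun j _ => quadForm_graphLaplacian_nonneg G (x · j)

theorem Spen_eq_zero_iff : Spen n k x = 0 ↔ ∀ i, ∑ j, x i j = 1 := by
  simp only [Spen, sum_eq_zero_iff_of_nonneg fun _ _ => sq_nonneg _, mem_univ, true_implies,
    sq_eq_zero_iff, sub_eq_zero]

theorem Rpen_eq_zero_iff : Rpen n k c x y = 0 ↔ ∀ j, ∑ i, x i j = ∑ i', y j i' := by
  simp only [Rpen, sum_eq_zero_iff_of_nonneg fun _ _ => sq_nonneg _, mem_univ, true_implies,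
    sq_eq_zero_iff, sub_eq_zero]

theorem Ppen_eq_zero_iff :
    Ppen n k G x = 0 ↔ ∀ j u v, G.Reachable u v → x u j = x v j := by
  simp only [Ppen, sum_eq_zero_iff_of_nonneg fun j _ => quadForm_graphLaplacian_nonneg G (x · j),
    mem_univ, true_implies, quadForm_graphLaplacian_eq_zero_iff]

theorem Fobj_nonneg : 0 ≤ Fobj n k c G x y :=
  add_nonneg (add_nonneg Spen_nonneg Rpen_nonneg) Ppen_nonneg

theorem Fobj_eq_zero_iff :
    Fobj n k c G x y = 0 ↔ Spen n k x = 0 ∧ Rpen n k c x y = 0 ∧ Ppen n k G x = 0 := by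
  rw [Fobj, add_eq_zero_iff_of_nonneg (add_nonneg Spen_nonneg Rpen_nonneg) Ppen_nonneg,
    add_eq_zero_iff_of_nonneg Spen_nonneg Rpen_nonneg, and_assoc]

end Penalties

theorem exists_eq_one_of_sum_eq_one {ι : Type*} [Fintype ι] {f : ι → ℤ}
    (hf : ∀ i, f i = 0 ∨ f i = 1) (hsum : ∑ i, f i = 1) : ∃ i, f i = 1 := by
  obtain ⟨i, -, hi⟩ := exists_ne_zero_of_sum_ne_zero (hsum ▸ one_ne_zero)
  exact ⟨i, (hf i).resolve_left hi⟩

theorem sum_le_card_of_binary {ι : Type*} [Fintype ι] {f : ι → ℤ}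
    (hf : ∀ i, f i = 0 ∨ f i = 1) : ∑ i, f i ≤ Fintype.card ι := by
  calc ∑ i, f i ≤ ∑ _i : ι, (1 : ℤ) := sum_le_sum fun i _ => by rcases hf i with h | h <;> simp [h]
    _ = Fintype.card ι := by simp

theorem card_le_sum_of_binary {ι : Type*} [Fintype ι] {f : ι → ℤ} (s : Finset ι)
    (hf : ∀ i, f i = 0 ∨ f i = 1) (hs : ∀ i ∈ s, f i = 1) : (#s : ℤ) ≤ ∑ i, f i := by
  calc (#s : ℤ) = ∑ i ∈ s, f i := by simp [sum_congr rfl hs]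
    _ ≤ ∑ i, f i := sum_le_sum_of_subset_of_nonneg (subset_univ s)
        fun i _ _ => by rcases hf i with h | h <;> simp [h]

theorem exists_column_eq_one_on_component {V ι : Type*} [Fintype ι] {G : SimpleGraph V}
    {x : V → ι → ℤ} (hx : ∀ v j, x v j = 0 ∨ x v j = 1) (hrow : ∀ v, ∑ j, x v j = 1)
    (hreach : ∀ j u v, G.Reachable u v → x u j = x v j) (K : G.ConnectedComponent) :
    ∃ j, ∀ v, G.connectedComponentMk v = K → x v j = 1 := by
  obtain ⟨v₀, rfl⟩ := K.exists_rep
  obtain ⟨j, hj⟩ := exists_eq_one_of_sum_eq_one (hx v₀) (hrow v₀)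
  exact ⟨j, fun v hv => hreach j v v₀ (SimpleGraph.ConnectedComponent.exact hv) ▸ hj⟩

open Classical in
/-- If some connected component of the interaction graph `G` has more vertices
than every core capacity `cⱼ`, then no valid assignment exists:
`F(x,y) > 0` for every binary `x` and `y`. -/
theorem big_component_no_valid_assignment (n k : ℕ) (c : Fin k → ℕ)
    (G : SimpleGraph (Fin n)) [DecidableRel G.Adj]
    (K : G.ConnectedComponent)
    (hK : ∀ j, c j < (Finset.univ.filter
        (fun v => G.connectedComponentMk v = K)).card) :
    ∀ (x : Fin n → Fin k → ℤ) (y : (j : Fin k) → Fin (c j) → ℤ),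
      (∀ i j, x i j = 0 ∨ x i j = 1) →
      (∀ j i', y j i' = 0 ∨ y j i' = 1) →
      0 < Fobj n k c G x y := by
  intro x y hx hy
  refine Fobj_nonneg.lt_of_ne' fun hF => ?_
  obtain ⟨hS, hR, hP⟩ := Fobj_eq_zero_iff.mp hF
  obtain ⟨j, hj⟩ := exists_column_eq_one_on_component hx (Spen_eq_zero_iff.mp hS)
    (Ppen_eq_zero_iff.mp hP) K
  have hcard := card_le_sum_of_binary ({v | G.connectedComponentMk v = K} : Finset _) (hx · j)
    fun v hv => hj v (mem_filter.mp hv).2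
  have hcap : ∑ i, x i j ≤ c j := by
    simpa [Rpen_eq_zero_iff.mp hR j] using sum_le_card_of_binary (hy j)
  exact (hK j).not_ge (by exact_mod_cast hcard.trans hcap)
end
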